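/- Let q be an odd prime power with characteristic p, and let d ≥ 2 with p dividing d + 2. Let W = {x ∈ F_q^{d+1} : x_1 + ⋯ + x_{d+1} = 0}. Then there exists a two-distance set X ⊆ W with |X| = C(d+2, 2) = (d+2)(d+1)/2 with respect to dist²(x,y) = Σ_{i=1}^{d+1} (x_i − y_i)². -/
import Mathlib

open Finset

/-- auxiliary vector family -/
private def uu (F : Type*) [Field F] (d : ℕ) (a : Fin (d+2)) (i : Fin (d+1)) : F :=
  1 + (if a = i.succ then 1 else 0) - (if a = 0 then 1 else 0)

private lemma gram {F : Type*} [Field F] {d : ℕ} (h2 : ((d:F) + 2) = 0) (a b : Fin (d+2)) :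
    ∑ i, uu F d a i * uu F d b i
      = 1 + (if a = b then (1:F) else 0) - (if a = 0 then 1 else 0) - (if b = 0 then 1 else 0) := by
  rcases eq_or_ne a 0 with rfl | ha
  · have : ∀ i : Fin (d+1), uu F d 0 i = 0 := by
      intro i; simp [uu, (Fin.succ_ne_zero i).symm]
    simp only [this, zero_mul, Finset.sum_const_zero]
    rcases eq_or_ne b 0 with rfl | hb
    · simp
    · simp [hb, Ne.symm hb]
  · obtain ⟨a', rfl⟩ := Fin.exists_succ_eq_of_ne_zero ha
    rcases eq_or_ne b 0 with rfl | hb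
    · have : ∀ i : Fin (d+1), uu F d 0 i = 0 := by
        intro i; simp [uu, (Fin.succ_ne_zero i).symm]
      simp only [this, mul_zero, Finset.sum_const_zero]
      simp [ha, (Fin.succ_ne_zero a').symm]
    · obtain ⟨b', rfl⟩ := Fin.exists_succ_eq_of_ne_zero hb
      have hu : ∀ (c : Fin (d+1)) (i : Fin (d+1)),
          uu F d c.succ i = 1 + (if i = c then 1 else 0) := by
        intro c i
        simp [uu, Fin.succ_ne_zero, Fin.succ_inj, eq_comm]
      simp only [hu]
      have expand : ∀ i : Fin (d+1),
          (1 + (if i = a' then (1:F) else 0)) * (1 + (if i = b' then 1 else 0))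
            = 1 + ((if i = a' then (1:F) else 0) + ((if i = b' then (1:F) else 0)
                + (if i = a' then (1:F) else 0) * (if i = b' then 1 else 0))) := by
        intro i; ring
      rw [Finset.sum_congr rfl fun i _ => expand i]
      rw [Finset.sum_add_distrib, Finset.sum_add_distrib, Finset.sum_add_distrib]
      have h1 : ∑ _i : Fin (d+1), (1:F) = (d:F) + 1 := by
        simp [Finset.card_univ]
      have h3 : ∑ i : Fin (d+1), (if i = a' then (1:F) else 0) * (if i = b' then 1 else 0)
          = if a' = b' then 1 else 0 := by
        rcases eq_or_ne a' b' with rfl | hne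
        · rw [if_pos rfl]
          have e : ∀ i : Fin (d+1), (if i = a' then (1:F) else 0) * (if i = a' then 1 else 0)
              = if i = a' then 1 else 0 := fun i => by by_cases h : i = a' <;> simp [h]
          rw [Finset.sum_congr rfl fun i _ => e i, Finset.sum_ite_eq']
          simp
        · rw [if_neg hne]
          apply Finset.sum_eq_zero
          intro i _
          by_cases hia : i = a' <;> simp [hia, hne]
      rw [h1, h3, Finset.sum_ite_eq', Finset.sum_ite_eq']
      simp only [Finset.mem_univ, if_true, Fin.succ_inj, Fin.succ_ne_zero, if_neg (Fin.succ_ne_zero a'), if_neg (Fin.succ_ne_zero b')]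
      have : (d:F) = -2 := by linear_combination h2
      rw [this]; simp; ring

private lemma sum_uu {F : Type*} [Field F] {d : ℕ} (h2 : ((d:F) + 2) = 0) (a : Fin (d+2)) :
    ∑ i, uu F d a i = 0 := by
  rcases eq_or_ne a 0 with rfl | ha
  · have : ∀ i : Fin (d+1), uu F d 0 i = 0 := by
      intro i; simp [uu, (Fin.succ_ne_zero i).symm]
    simp [this]
  · obtain ⟨a', rfl⟩ := Fin.exists_succ_eq_of_ne_zero ha
    have hu : ∀ i : Fin (d+1), uu F d a'.succ i = 1 + (if i = a' then 1 else 0) := by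
      intro i; simp [uu, Fin.succ_ne_zero, Fin.succ_inj, eq_comm]
    rw [Finset.sum_congr rfl fun i _ => hu i, Finset.sum_add_distrib, Finset.sum_ite_eq']
    simp [Finset.card_univ]
    linear_combination h2

private lemma quad {F : Type*} [Field F] {d : ℕ} (h2 : ((d:F) + 2) = 0) (a b c e : Fin (d+2)) :
    ∑ i, ((uu F d a i + uu F d b i) - (uu F d c i + uu F d e i))^2
      = 4 + 2*(if a = b then (1:F) else 0) + 2*(if c = e then 1 else 0)
        - 2*(if a = c then 1 else 0) - 2*(if a = e then 1 else 0)
        - 2*(if b = c then 1 else 0) - 2*(if b = e then 1 else 0) := by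
  have expand : ∀ i : Fin (d+1), ((uu F d a i + uu F d b i) - (uu F d c i + uu F d e i))^2
      = (uu F d a i * uu F d a i + uu F d b i * uu F d b i + uu F d c i * uu F d c i
          + uu F d e i * uu F d e i)
        + 2*(uu F d a i * uu F d b i) + 2*(uu F d c i * uu F d e i)
        - 2*(uu F d a i * uu F d c i) - 2*(uu F d a i * uu F d e i)
        - 2*(uu F d b i * uu F d c i) - 2*(uu F d b i * uu F d e i) := fun i => by ring
  rw [Finset.sum_congr rfl fun i _ => expand i]
  simp only [Finset.sum_sub_distrib, Finset.sum_add_distrib, ← Finset.mul_sum, gram h2]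
  simp only [eq_self_iff_true, if_true]
  ring

private def ffp (F : Type*) [Field F] (d : ℕ) (s : (_ : Fin (d+2)) × Fin (d+2)) :
    Fin (d+1) → F := fun i => uu F d s.2 i + uu F d s.1 i

private lemma key_dist {F : Type*} [Field F] {d : ℕ} (h2 : ((d:F) + 2) = 0)
    (s t : (_ : Fin (d+2)) × Fin (d+2)) (hs : s.2 < s.1) (ht : t.2 < t.1) (hne : s ≠ t) :
    (∑ i, (ffp F d s i - ffp F d t i)^2 = 2 ∨ ∑ i, (ffp F d s i - ffp F d t i)^2 = 4) := by
  obtain ⟨a, b⟩ := s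
  obtain ⟨c, e⟩ := t
  simp only at hs ht
  simp only [ffp]
  have hval := quad h2 b a e c
  have hba : b ≠ a := ne_of_lt hs
  have hec : e ≠ c := ne_of_lt ht
  rw [if_neg hba, if_neg hec] at hval
  by_cases h1 : b = e <;> by_cases h2' : b = c <;> by_cases h3 : a = e <;> by_cases h4 : a = c
  · exact absurd (h1.symm.trans h2') hec
  · exact absurd (h1.symm.trans h2') hec
  · exact absurd (h1.symm.trans h2') hec
  · exact absurd (h1.symm.trans h2') hec
  · exact absurd (h1.trans h3.symm) hba
  · exact absurd (h1.trans h3.symm) hba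
  · exfalso; apply hne; rw [h1, h4]
  · left; rw [hval, if_pos h1, if_neg h2', if_neg h3, if_neg h4]; norm_num
  · exact absurd (h2'.trans h4.symm) hba
  · exfalso; rw [h2'] at hs; rw [h3] at hs; exact absurd hs (lt_asymm ht)
  · exact absurd (h2'.trans h4.symm) hba
  · left; rw [hval, if_neg h1, if_pos h2', if_neg h3, if_neg h4]; norm_num
  · exact absurd (h3.symm.trans h4) hec
  · left; rw [hval, if_neg h1, if_neg h2', if_pos h3, if_neg h4]; norm_num
  · left; rw [hval, if_neg h1, if_neg h2', if_neg h3, if_pos h4]; norm_num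
  · right; rw [hval, if_neg h1, if_neg h2', if_neg h3, if_neg h4]; norm_num


/-- Let `F = 𝔽_q` be a finite field of odd order `q` and characteristic
`p`, and let `d ≥ 2` with `p ∣ d + 2`. Then inside the hyperplane
`W = {x ∈ F^{d+1} : x_1 + ⋯ + x_{d+1} = 0}` there exists a two-distance set `X` (with
respect to `dist²(x, y) = ∑ (x_i - y_i)²`) of size `(d+2)(d+1)/2 = C(d+2, 2)`. -/
theorem stmt_15 (F : Type*) [Field F] [Fintype F] (hq : Odd (Fintype.card F))
    (p : ℕ) [CharP F p] (d : ℕ) (hd : 2 ≤ d) (hpd : p ∣ d + 2) :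
    ∃ X : Finset (Fin (d + 1) → F),
      (∀ x ∈ X, ∑ i, x i = 0) ∧
      X.card = (d + 2) * (d + 1) / 2 ∧
      {v : F | ∃ x ∈ X, ∃ y ∈ X, x ≠ y ∧ v = ∑ i, (x i - y i) ^ 2}.ncard = 2 := by
  classical
  have h2F : ((d:F) + 2) = 0 := by
    have h := (CharP.cast_eq_zero_iff F p (d+2)).mpr hpd
    push_cast at h
    linear_combination h
  have hchar : ringChar F ≠ 2 := by
    intro h
    have := FiniteField.even_card_of_char_two h
    rcases hq with ⟨k, hk⟩
    omega
  have h2ne : (2:F) ≠ 0 := Ring.two_ne_zero hchar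
  have h4ne : (4:F) ≠ 0 := by
    intro h; apply h2ne
    have : (2:F) * 2 = 0 := by linear_combination h
    rcases mul_eq_zero.mp this with h' | h' <;> exact h'
  -- the index set
  set T : Finset ((_ : Fin (d+2)) × Fin (d+2)) :=
    Finset.univ.sigma fun b => Finset.Iio b with hT
  have hTmem : ∀ s : (_ : Fin (d+2)) × Fin (d+2), s ∈ T ↔ s.2 < s.1 := by
    intro s; simp [hT]
  set X : Finset (Fin (d+1) → F) := T.image (ffp F d) with hX
  refine ⟨X, ?_, ?_, ?_⟩
  · -- sums are zero
    intro x hx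
    obtain ⟨s, hs, rfl⟩ := Finset.mem_image.mp hx
    show ∑ i, (uu F d s.2 i + uu F d s.1 i) = 0
    rw [Finset.sum_add_distrib, sum_uu h2F, sum_uu h2F, add_zero]
  · -- cardinality
    have hinj : Set.InjOn (ffp F d) T := by
      intro s hs t ht hst
      by_contra hne
      have := key_dist h2F s t ((hTmem s).mp hs) ((hTmem t).mp ht) hne
      rw [Finset.sum_congr rfl fun i _ => by rw [hst]] at this
      simp only [sub_self] at this
      rcases this with h | h
      · exact h2ne (by rw [← h]; simp)
      · exact h4ne (by rw [← h]; simp)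
    rw [hX, Finset.card_image_of_injOn hinj, hT, Finset.card_sigma]
    have : ∀ b : Fin (d+2), (Finset.Iio b).card = (b : ℕ) := fun b => Fin.card_Iio b
    rw [Finset.sum_congr rfl fun b _ => this b]
    rw [Fin.sum_univ_eq_sum_range (fun i => i) (d+2), Finset.sum_range_id]
    norm_num
  · -- distance set
    have hsub : {v : F | ∃ x ∈ X, ∃ y ∈ X, x ≠ y ∧ v = ∑ i, (x i - y i) ^ 2} = {2, 4} := by
      ext v
      simp only [Set.mem_setOf_eq, Set.mem_insert_iff, Set.mem_singleton_iff]
      constructor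
      · rintro ⟨x, hx, y, hy, hxy, rfl⟩
        obtain ⟨s, hs, rfl⟩ := Finset.mem_image.mp hx
        obtain ⟨t, ht, rfl⟩ := Finset.mem_image.mp hy
        exact key_dist h2F s t ((hTmem s).mp hs) ((hTmem t).mp ht)
          (fun h => hxy (by rw [h]))
      · have h0 : (0:ℕ) < d + 2 := by omega
        have h1 : (1:ℕ) < d + 2 := by omega
        have h2 : (2:ℕ) < d + 2 := by omega
        have h3 : (3:ℕ) < d + 2 := by omega
        have hmem : ∀ s : (_ : Fin (d+2)) × Fin (d+2), s.2 < s.1 → ffp F d s ∈ X := by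
          intro s hs
          exact Finset.mem_image_of_mem _ ((hTmem s).mpr hs)
        have n01 : (⟨0,h0⟩ : Fin (d+2)) ≠ ⟨1,h1⟩ := by simp [Fin.ext_iff]
        have n02 : (⟨0,h0⟩ : Fin (d+2)) ≠ ⟨2,h2⟩ := by simp [Fin.ext_iff]
        have n03 : (⟨0,h0⟩ : Fin (d+2)) ≠ ⟨3,h3⟩ := by simp [Fin.ext_iff]
        have n12 : (⟨1,h1⟩ : Fin (d+2)) ≠ ⟨2,h2⟩ := by simp [Fin.ext_iff]
        have n13 : (⟨1,h1⟩ : Fin (d+2)) ≠ ⟨3,h3⟩ := by simp [Fin.ext_iff]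
        have n23 : (⟨2,h2⟩ : Fin (d+2)) ≠ ⟨3,h3⟩ := by simp [Fin.ext_iff]
        rintro (rfl | rfl)
        · -- value 2 : pairs (1,0) and (2,0)
          have hv : ∑ i, (ffp F d ⟨⟨1,h1⟩, ⟨0,h0⟩⟩ i - ffp F d ⟨⟨2,h2⟩, ⟨0,h0⟩⟩ i)^2 = 2 := by
            have hq2 := quad h2F (⟨0,h0⟩ : Fin (d+2)) ⟨1,h1⟩ ⟨0,h0⟩ ⟨2,h2⟩
            simp only [ffp]
            rw [hq2, if_neg n01, if_neg n02, if_pos rfl, if_neg (Ne.symm n01), if_neg n12]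
            norm_num
          refine ⟨_, hmem ⟨⟨1,h1⟩, ⟨0,h0⟩⟩ (by simp [Fin.lt_def]),
            _, hmem ⟨⟨2,h2⟩, ⟨0,h0⟩⟩ (by simp [Fin.lt_def]), ?_, hv.symm⟩
          intro h
          rw [h] at hv
          simp only [sub_self] at hv
          apply h2ne
          rw [← hv]; simp
        · -- value 4 : pairs (1,0) and (3,2)
          have hv : ∑ i, (ffp F d ⟨⟨1,h1⟩, ⟨0,h0⟩⟩ i - ffp F d ⟨⟨3,h3⟩, ⟨2,h2⟩⟩ i)^2 = 4 := by
            have hq2 := quad h2F (⟨0,h0⟩ : Fin (d+2)) ⟨1,h1⟩ ⟨2,h2⟩ ⟨3,h3⟩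
            simp only [ffp]
            rw [hq2, if_neg n01, if_neg n23, if_neg n02, if_neg n03, if_neg n12, if_neg n13]
            norm_num
          refine ⟨_, hmem ⟨⟨1,h1⟩, ⟨0,h0⟩⟩ (by simp [Fin.lt_def]),
            _, hmem ⟨⟨3,h3⟩, ⟨2,h2⟩⟩ (by simp [Fin.lt_def]), ?_, hv.symm⟩
          intro h
          rw [h] at hv
          simp only [sub_self] at hv
          apply h4ne
          rw [← hv]; simp
    rw [hsub]
    refine Set.ncard_pair fun h => h2ne ?_
    linear_combination -h
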